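/- arXiv:2407.03087 — 2 statements merged into one kernel-verified Lean document; each statement's English description precedes it below -/
import Mathlib

section
/- For subnormalised states ρ, σ on a finite-dimensional Hilbert space (i.e., positive semidefinite matrices with trace at most 1), the generalised trace distance Δ(ρ,σ) = (1/2)‖ρ−σ‖₁ + (1/2)|Tr(ρ−σ)| satisfies Δ(ρ,σ) ≤ P(ρ,σ) ≤ √(2Δ(ρ,σ) − Δ(ρ,σ)²) ≤ √(2Δ(ρ,σ)), where P(ρ,σ) = √(1−F(ρ,σ)) is the purified distance and F is the generalised fidelity F(ρ,σ) = (‖√ρ√σ‖₁ + √((1−Tr ρ)(1−Tr σ)))². -/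
open Matrix
open scoped ComplexOrder

variable {n : Type*}

/-- The positive semidefinite square root of a positive semidefinite matrix
(the definition of `Matrix.PosSemidef.sqrt` in the older Mathlib, since removed). -/
noncomputable def Matrix.PosSemidef.sqrt {m : Type*} [Fintype m] [DecidableEq m] {𝕜 : Type*}
    [RCLike 𝕜] {A : Matrix m m 𝕜} (hA : A.PosSemidef) : Matrix m m 𝕜 :=
  hA.1.eigenvectorUnitary.1 * diagonal ((↑) ∘ (√·) ∘ hA.1.eigenvalues) *
    (star hA.1.eigenvectorUnitary : Matrix m m 𝕜)

/-- Trace norm of a complex matrix: `Tr √(AᴴA)`. -/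
noncomputable def traceNorm [Fintype n] [DecidableEq n] (A : Matrix n n ℂ) : ℝ :=
  ((Matrix.posSemidef_conjTranspose_mul_self A).sqrt.trace).re

/-- Generalised fidelity of two subnormalised states. -/
noncomputable def gFidelity [Fintype n] [DecidableEq n] {ρ σ : Matrix n n ℂ}
    (hρ : ρ.PosSemidef) (hσ : σ.PosSemidef) : ℝ :=
  (traceNorm (hρ.sqrt * hσ.sqrt) +
    Real.sqrt ((1 - ρ.trace.re) * (1 - σ.trace.re))) ^ 2

/-- Purified distance. -/
noncomputable def pDist [Fintype n] [DecidableEq n] {ρ σ : Matrix n n ℂ}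
    (hρ : ρ.PosSemidef) (hσ : σ.PosSemidef) : ℝ :=
  Real.sqrt (1 - gFidelity hρ hσ)

/-- Generalised trace distance. -/
noncomputable def gTraceDist [Fintype n] [DecidableEq n] (ρ σ : Matrix n n ℂ) : ℝ :=
  (1 / 2) * traceNorm (ρ - σ) + (1 / 2) * |ρ.trace.re - σ.trace.re|

/-!
Completing a subnormalised state `ρ` to the normalised state `ρ̂ = ρ ⊕ (1 - Tr ρ)` leaves the
generalised fidelity unchanged, because the trace norm is additive over diagonal blocks, and
turns the generalised trace distance into `‖ρ̂ - σ̂‖₁ / 2`. So it suffices to show, for normalised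
states and `t = ‖√ρ √σ‖₁`, that `1 - t ≤ ‖ρ - σ‖₁ / 2 ≤ √(1 - t²)`; the rest is real arithmetic.

The lower bound is the Powers–Størmer inequality `‖√ρ - √σ‖₂² ≤ ‖ρ - σ‖₁`, obtained by pairing
`ρ - σ` with the unitary `sign (√ρ - √σ)` in an eigenbasis of `√ρ - √σ`. For the upper bound write
`ρ = A A*` and `σ = B B*` with `A = √ρ`, `B = √σ W`, where the unitary `W` is chosen so that
`Tr (A* B) = t`. Then `2 (ρ - σ) = (A - B)(A + B)* + (A + B)(A - B)*`, and Hölder's inequality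
`‖X Y*‖₁ ≤ ‖X‖₂ ‖Y‖₂` gives `‖ρ - σ‖₁ ≤ √(2 - 2t) √(2 + 2t)`.

The trace norm is controlled through a singular value decomposition, which yields
`Re Tr (A W) ≤ ‖A‖₁` for every unitary `W`, with equality for a suitable one.
-/

open scoped MatrixOrder InnerProductSpace

namespace Matrix.PosSemidef
variable {m p 𝕜 : Type*} [Fintype m] [Fintype p] [DecidableEq m] [DecidableEq p] [RCLike 𝕜]
  {A B : Matrix m m 𝕜}

theorem sqrt_eq_cfcSqrt (hA : A.PosSemidef) : hA.sqrt = CFC.sqrt A := by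
  rw [CFC.sqrt_eq_real_sqrt A hA.nonneg, cfcₙ_eq_cfc, hA.1.cfc_eq, IsHermitian.cfc,
    Unitary.conjStarAlgAut_apply]
  rfl

theorem posSemidef_sqrt (hA : A.PosSemidef) : hA.sqrt.PosSemidef := by
  rw [sqrt_eq_cfcSqrt, ← nonneg_iff_posSemidef]
  exact CFC.sqrt_nonneg A

theorem sqrt_mul_self (hA : A.PosSemidef) : hA.sqrt * hA.sqrt = A := by
  rw [sqrt_eq_cfcSqrt]
  exact CFC.sqrt_mul_sqrt_self A hA.nonneg

theorem sqrt_eq_of_mul_self_eq (hA : A.PosSemidef) (hB : B.PosSemidef) (h : B * B = A) :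
    hA.sqrt = B := by
  rw [sqrt_eq_cfcSqrt]
  exact CFC.sqrt_unique h hB.nonneg

theorem conjStarAlgAut (hA : A.PosSemidef) (u : unitaryGroup m 𝕜) :
    (Unitary.conjStarAlgAut 𝕜 _ u A).PosSemidef := by
  simpa [star_eq_conjTranspose] using hA.mul_mul_conjTranspose_same (u : Matrix m m 𝕜)

theorem fromBlocks_zero {D : Matrix p p 𝕜} (hA : A.PosSemidef) (hD : D.PosSemidef) :
    (fromBlocks A 0 0 D).PosSemidef := by
  have h : fromBlocks A 0 0 D =
      (fromBlocks hA.sqrt 0 0 hD.sqrt)ᴴ * fromBlocks hA.sqrt 0 0 hD.sqrt := by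
    rw [fromBlocks_conjTranspose, fromBlocks_multiply, hA.posSemidef_sqrt.1.eq,
      hD.posSemidef_sqrt.1.eq, hA.sqrt_mul_self, hD.sqrt_mul_self]
    simp
  exact h ▸ posSemidef_conjTranspose_mul_self _

theorem sqrt_fromBlocks {D : Matrix p p 𝕜} (hA : A.PosSemidef) (hD : D.PosSemidef)
    (h : (fromBlocks A 0 0 D).PosSemidef) : h.sqrt = fromBlocks hA.sqrt 0 0 hD.sqrt := by
  refine h.sqrt_eq_of_mul_self_eq (hA.posSemidef_sqrt.fromBlocks_zero hD.posSemidef_sqrt) ?_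
  rw [fromBlocks_multiply, hA.sqrt_mul_self, hD.sqrt_mul_self]
  simp

theorem sqrt_diagonal {d : m → ℝ} (hd : ∀ i, 0 ≤ d i)
    (h : (diagonal fun i ↦ (d i : 𝕜)).PosSemidef) :
    h.sqrt = diagonal fun i ↦ ((√(d i) : ℝ) : 𝕜) := by
  refine h.sqrt_eq_of_mul_self_eq
    (posSemidef_diagonal_iff.mpr fun i ↦ RCLike.ofReal_nonneg.mpr (Real.sqrt_nonneg _)) ?_
  rw [diagonal_mul_diagonal]
  simp_rw [← RCLike.ofReal_mul, Real.mul_self_sqrt (hd _)]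

end Matrix.PosSemidef

theorem Matrix.trace_fromBlocks {m p R : Type*} [Fintype m] [Fintype p] [AddCommMonoid R]
    (A : Matrix m m R) (B : Matrix m p R) (C : Matrix p m R) (D : Matrix p p R) :
    (fromBlocks A B C D).trace = A.trace + D.trace := by
  simp [trace, Fintype.sum_sum_type]

section HilbertSchmidt
variable {m : Type*} [Fintype m]

theorem trace_conjTranspose_mul_eq_inner (Y Z : Matrix m m ℂ) :
    (Yᴴ * Z).trace = ⟪WithLp.toLp 2 Y.vec, WithLp.toLp 2 Z.vec⟫_ℂ := by
  rw [EuclideanSpace.inner_eq_star_dotProduct, dotProduct_comm, star_vec_dotProduct_vec]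

theorem re_trace_conjTranspose_mul_le (Y Z : Matrix m m ℂ) :
    (Yᴴ * Z).trace.re ≤ √(Yᴴ * Y).trace.re * √(Zᴴ * Z).trace.re := by
  simp only [trace_conjTranspose_mul_eq_inner, ← RCLike.re_eq_complex_re, ← norm_eq_sqrt_re_inner]
  exact re_inner_le_norm _ _

theorem re_trace_conjTranspose_mul_comm (A B : Matrix m m ℂ) :
    (Bᴴ * A).trace.re = (Aᴴ * B).trace.re := by
  rw [← conjTranspose_conjTranspose A, ← conjTranspose_mul, trace_conjTranspose,
    conjTranspose_conjTranspose, Complex.star_def, Complex.conj_re]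

theorem re_trace_conjTranspose_mul_self_sub (A B : Matrix m m ℂ) :
    ((A - B)ᴴ * (A - B)).trace.re =
      (Aᴴ * A).trace.re + (Bᴴ * B).trace.re - 2 * (Aᴴ * B).trace.re := by
  have : (A - B)ᴴ * (A - B) = Aᴴ * A + Bᴴ * B - Aᴴ * B - Bᴴ * A := by
    rw [conjTranspose_sub]
    noncomm_ring
  rw [this, trace_sub, trace_sub, trace_add, Complex.sub_re, Complex.sub_re, Complex.add_re,
    re_trace_conjTranspose_mul_comm A B]
  ring

theorem re_trace_conjTranspose_mul_self_add (A B : Matrix m m ℂ) :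
    ((A + B)ᴴ * (A + B)).trace.re =
      (Aᴴ * A).trace.re + (Bᴴ * B).trace.re + 2 * (Aᴴ * B).trace.re := by
  have : (A + B)ᴴ * (A + B) = Aᴴ * A + Bᴴ * B + Aᴴ * B + Bᴴ * A := by
    rw [conjTranspose_add]
    noncomm_ring
  rw [this, trace_add, trace_add, trace_add, Complex.add_re, Complex.add_re, Complex.add_re,
    re_trace_conjTranspose_mul_comm A B]
  ring

theorem inner_toLp_col_eq_conjTranspose_mul (B : Matrix m m ℂ) (j k : m) :
    ⟪WithLp.toLp 2 (fun i ↦ B i j), WithLp.toLp 2 (fun i ↦ B i k)⟫_ℂ = (Bᴴ * B) j k := by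
  simp [mul_apply, PiLp.inner_apply, mul_comm]

end HilbertSchmidt

section TraceNorm
variable {m : Type*} [Fintype m] [DecidableEq m]

theorem exists_unitary_mul_diagonal {B : Matrix m m ℂ} {d : m → ℝ}
    (hB : Bᴴ * B = diagonal fun i ↦ ((d i ^ 2 : ℝ) : ℂ)) :
    ∃ U ∈ unitaryGroup m ℂ, B = U * diagonal fun i ↦ (d i : ℂ) := by
  let col : m → EuclideanSpace ℂ m := fun j ↦ WithLp.toLp 2 fun i ↦ B i j
  have hcol : ∀ j k, ⟪col j, col k⟫_ℂ = if j = k then ((d j ^ 2 : ℝ) : ℂ) else 0 := by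
    intro j k
    rw [inner_toLp_col_eq_conjTranspose_mul, hB, diagonal_apply]
  have horth : Orthonormal ℂ ({j | d j ≠ 0}.domRestrict fun j ↦ ((d j : ℂ)⁻¹) • col j) := by
    rw [orthonormal_iff_ite]
    rintro ⟨j, hj⟩ ⟨k, hk⟩
    simp only [Set.domRestrict_apply, inner_smul_left, inner_smul_right, hcol, Subtype.mk.injEq]
    split_ifs with hjk
    · subst hjk
      simp only [map_inv₀, Complex.conj_ofReal]
      push_cast
      field_simp [Complex.ofReal_ne_zero.mpr hj]
    · simp
  obtain ⟨b, hb⟩ := horth.exists_orthonormalBasis_extension_of_card_eq finrank_euclideanSpace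
  refine ⟨(EuclideanSpace.basisFun m ℂ).toBasis.toMatrix b.toBasis,
    OrthonormalBasis.toMatrix_orthonormalBasis_mem_unitary _ _, ?_⟩
  ext i j
  have hbij : (EuclideanSpace.basisFun m ℂ).toBasis.toMatrix b.toBasis i j = b j i := by
    simp [Module.Basis.toMatrix_apply]
  rw [mul_diagonal, hbij]
  by_cases hj : d j = 0
  · have : col j = 0 := by
      rw [← inner_self_eq_zero (𝕜 := ℂ), hcol, if_pos rfl, hj]
      simp
    simpa [hj, col] using congrFun (congrArg WithLp.ofLp this) i
  · rw [hb j hj, PiLp.smul_apply, smul_eq_mul]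
    field_simp
    rfl

theorem traceNorm_eq_sum_sqrt_eigenvalues (A : Matrix m m ℂ) :
    traceNorm A = ∑ i, √((posSemidef_conjTranspose_mul_self A).1.eigenvalues i) := by
  rw [traceNorm, PosSemidef.sqrt, trace_mul_cycle, Unitary.coe_star_mul_self, one_mul,
    trace_diagonal, Complex.re_sum]
  simp

theorem exists_svd (A : Matrix m m ℂ) :
    ∃ U ∈ unitaryGroup m ℂ, ∃ V ∈ unitaryGroup m ℂ, ∃ d : m → ℝ, (∀ i, 0 ≤ d i) ∧
      A = U * diagonal (fun i ↦ (d i : ℂ)) * star V ∧ traceNorm A = ∑ i, d i := by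
  have hH := posSemidef_conjTranspose_mul_self A
  set V : Matrix m m ℂ := (hH.1.eigenvectorUnitary : Matrix m m ℂ)
  have hAV : (A * V)ᴴ * (A * V) = diagonal fun i ↦ ((√(hH.1.eigenvalues i) ^ 2 : ℝ) : ℂ) := by
    simp_rw [Real.sq_sqrt (hH.eigenvalues_nonneg _)]
    calc (A * V)ᴴ * (A * V) = star V * (Aᴴ * A) * V := by
          rw [conjTranspose_mul, ← star_eq_conjTranspose V]
          simp only [mul_assoc]
      _ = _ := by
          rw [← Unitary.conjStarAlgAut_star_apply (S := ℂ)]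
          exact hH.1.conjStarAlgAut_star_eigenvectorUnitary
  obtain ⟨U, hU, hAVU⟩ := exists_unitary_mul_diagonal hAV
  refine ⟨U, hU, V, hH.1.eigenvectorUnitary.2, _, fun i ↦ Real.sqrt_nonneg _, ?_,
    traceNorm_eq_sum_sqrt_eigenvalues A⟩
  rw [← hAVU, mul_assoc, Unitary.mul_star_self_of_mem hH.1.eigenvectorUnitary.2, mul_one]

theorem traceNorm_nonneg (A : Matrix m m ℂ) : 0 ≤ traceNorm A := by
  obtain ⟨-, -, -, -, d, hd, -, htn⟩ := exists_svd A
  exact htn ▸ Finset.sum_nonneg fun i _ ↦ hd i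

theorem re_trace_mul_le_traceNorm (A : Matrix m m ℂ) {W : Matrix m m ℂ}
    (hW : W ∈ unitaryGroup m ℂ) : (A * W).trace.re ≤ traceNorm A := by
  obtain ⟨U, hU, V, hV, d, hd, rfl, htn⟩ := exists_svd A
  have hX : star V * W * U ∈ unitaryGroup m ℂ :=
    mul_mem (mul_mem (Unitary.star_mem hV) hW) hU
  have htr : (U * diagonal (fun i ↦ (d i : ℂ)) * star V * W).trace =
      ∑ i, (d i : ℂ) * (star V * W * U) i i := by
    rw [show U * diagonal (fun i ↦ (d i : ℂ)) * star V * W =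
      U * (diagonal (fun i ↦ (d i : ℂ)) * (star V * W)) by simp only [mul_assoc],
      trace_mul_comm, mul_assoc, mul_assoc]
    simp [trace, diagonal_mul]
  rw [htr, htn, Complex.re_sum]
  refine Finset.sum_le_sum fun i _ ↦ ?_
  calc ((d i : ℂ) * (star V * W * U) i i).re ≤ ‖(d i : ℂ) * (star V * W * U) i i‖ :=
        Complex.re_le_norm _
    _ ≤ d i := by
      rw [norm_mul, Complex.norm_real, Real.norm_of_nonneg (hd i)]
      exact mul_le_of_le_one_right (hd i) (entry_norm_bound_of_unitary hX i i)

theorem re_trace_le_traceNorm (A : Matrix m m ℂ) : A.trace.re ≤ traceNorm A := by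
  simpa using re_trace_mul_le_traceNorm A (one_mem (unitaryGroup m ℂ))

theorem exists_unitary_trace_mul_eq_traceNorm (A : Matrix m m ℂ) :
    ∃ W ∈ unitaryGroup m ℂ, (A * W).trace = traceNorm A := by
  obtain ⟨U, hU, V, hV, d, hd, rfl, htn⟩ := exists_svd A
  refine ⟨V * star U, mul_mem hV (Unitary.star_mem hU), ?_⟩
  rw [htn, mul_assoc, ← mul_assoc (star V), Unitary.star_mul_self_of_mem hV, one_mul,
    trace_mul_cycle, Unitary.star_mul_self_of_mem hU, one_mul, trace_diagonal]
  simp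

theorem traceNorm_mul_conjTranspose_le (X Y : Matrix m m ℂ) :
    traceNorm (X * Yᴴ) ≤ √(Xᴴ * X).trace.re * √(Yᴴ * Y).trace.re := by
  obtain ⟨W, hW, hXYW⟩ := exists_unitary_trace_mul_eq_traceNorm (X * Yᴴ)
  have hWX : (W * X)ᴴ * (W * X) = Xᴴ * X := by
    rw [conjTranspose_mul, mul_assoc, ← mul_assoc Wᴴ, ← star_eq_conjTranspose W,
      Unitary.star_mul_self_of_mem hW, one_mul]
  calc traceNorm (X * Yᴴ) = (Yᴴ * (W * X)).trace.re := by
        rw [← mul_assoc, trace_mul_cycle, hXYW, Complex.ofReal_re]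
    _ ≤ √(Yᴴ * Y).trace.re * √(Xᴴ * X).trace.re := by
        simpa only [hWX] using re_trace_conjTranspose_mul_le Y (W * X)
    _ = _ := mul_comm _ _

theorem traceNorm_le_of_add_self_eq {D X Y : Matrix m m ℂ} (h : D + D = X * Yᴴ + Y * Xᴴ) :
    traceNorm D ≤ √(Xᴴ * X).trace.re * √(Yᴴ * Y).trace.re := by
  obtain ⟨W, hW, hDW⟩ := exists_unitary_trace_mul_eq_traceNorm D
  have h2 : 2 * traceNorm D = (X * Yᴴ * W).trace.re + (Y * Xᴴ * W).trace.re := by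
    rw [← Complex.add_re, ← trace_add, ← add_mul, ← h, add_mul, trace_add, hDW]
    simp [two_mul]
  have hXY := (re_trace_mul_le_traceNorm _ hW).trans (traceNorm_mul_conjTranspose_le X Y)
  have hYX := (re_trace_mul_le_traceNorm _ hW).trans (traceNorm_mul_conjTranspose_le Y X)
  linarith

theorem trace_conjStarAlgAut (u : unitaryGroup m ℂ) (A : Matrix m m ℂ) :
    (Unitary.conjStarAlgAut ℂ _ u A).trace = A.trace := by
  rw [Unitary.conjStarAlgAut_apply, trace_mul_cycle, Unitary.coe_star_mul_self, one_mul]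

theorem traceNorm_conjStarAlgAut (u : unitaryGroup m ℂ) (A : Matrix m m ℂ) :
    traceNorm (Unitary.conjStarAlgAut ℂ _ u A) = traceNorm A := by
  set φ := Unitary.conjStarAlgAut ℂ (Matrix m m ℂ) u
  have hA := posSemidef_conjTranspose_mul_self A
  have hsqrt : (posSemidef_conjTranspose_mul_self (φ A)).sqrt = φ hA.sqrt := by
    refine PosSemidef.sqrt_eq_of_mul_self_eq _ (hA.posSemidef_sqrt.conjStarAlgAut u) ?_
    rw [← map_mul, hA.sqrt_mul_self, map_mul, ← star_eq_conjTranspose, map_star,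
      star_eq_conjTranspose]
  rw [traceNorm, hsqrt, trace_conjStarAlgAut, traceNorm]

theorem traceNorm_fromBlocks_zero {p : Type*} [Fintype p] [DecidableEq p] (A : Matrix m m ℂ)
    (D : Matrix p p ℂ) : traceNorm (fromBlocks A 0 0 D) = traceNorm A + traceNorm D := by
  have hA := posSemidef_conjTranspose_mul_self A
  have hD := posSemidef_conjTranspose_mul_self D
  have h : (fromBlocks A 0 0 D)ᴴ * fromBlocks A 0 0 D = fromBlocks (Aᴴ * A) 0 0 (Dᴴ * D) := by
    rw [fromBlocks_conjTranspose, fromBlocks_multiply]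
    simp
  have hsqrt : (posSemidef_conjTranspose_mul_self (fromBlocks A 0 0 D)).sqrt =
      fromBlocks hA.sqrt 0 0 hD.sqrt := by
    rw [PosSemidef.sqrt_eq_cfcSqrt, h, ← PosSemidef.sqrt_eq_cfcSqrt (hA.fromBlocks_zero hD),
      PosSemidef.sqrt_fromBlocks hA hD]
  rw [traceNorm, hsqrt, trace_fromBlocks, Complex.add_re, traceNorm, traceNorm]

theorem traceNorm_diagonal (d : m → ℝ) : traceNorm (diagonal fun i ↦ (d i : ℂ)) = ∑ i, |d i| := by
  have hdd : ∀ i, 0 ≤ d i * d i := fun i ↦ mul_self_nonneg _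
  have h : (diagonal fun i ↦ (d i : ℂ))ᴴ * diagonal (fun i ↦ (d i : ℂ)) =
      diagonal fun i ↦ ((d i * d i : ℝ) : ℂ) := by
    simp [diagonal_conjTranspose, diagonal_mul_diagonal]
  have hpsd : (diagonal fun i ↦ ((d i * d i : ℝ) : ℂ)).PosSemidef :=
    posSemidef_diagonal_iff.mpr fun i ↦ Complex.zero_le_real.mpr (hdd i)
  rw [traceNorm, PosSemidef.sqrt_eq_cfcSqrt, h, ← PosSemidef.sqrt_eq_cfcSqrt hpsd,
    PosSemidef.sqrt_diagonal hdd, trace_diagonal, Complex.re_sum]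
  simp [Real.sqrt_mul_self_eq_abs]

end TraceNorm

section StateBounds
variable {m : Type*} [Fintype m] [DecidableEq m]

theorem powers_stormer_of_sub_eq_diagonal {R S : Matrix m m ℂ} (hR : R.PosSemidef)
    (hS : S.PosSemidef) {l : m → ℝ} (hRS : R - S = diagonal fun i ↦ (l i : ℂ)) :
    ((R - S) * (R - S)).trace.re ≤ traceNorm (R * R - S * S) := by
  set sgn : m → ℂ := fun i ↦ if 0 ≤ l i then 1 else -1
  have hsgn : diagonal sgn ∈ unitaryGroup m ℂ := by
    rw [mem_unitaryGroup_iff, star_eq_conjTranspose, diagonal_conjTranspose, diagonal_mul_diagonal,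
      ← diagonal_one]
    congr 1
    ext i
    by_cases h : 0 ≤ l i <;> simp [sgn, h]
  have habs : ∀ i, |l i| ≤ (R i i + S i i).re := by
    intro i
    have hl : l i = (R i i).re - (S i i).re := by
      simpa using congrArg Complex.re (congrFun (congrFun hRS i) i).symm
    have hRi := (Complex.le_def.mp (hR.diag_nonneg (i := i))).1
    have hSi := (Complex.le_def.mp (hS.diag_nonneg (i := i))).1
    simp only [Complex.zero_re] at hRi hSi
    rw [Complex.add_re, hl, abs_le]
    constructor <;> linarith
  have htwice : R * R - S * S + (R * R - S * S) = (R - S) * (R + S) + (R + S) * (R - S) := by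
    noncomm_ring
  have htr : ((R * R - S * S) * diagonal sgn).trace = ∑ i, ((|l i| : ℝ) : ℂ) * (R i i + S i i) := by
    refine mul_left_cancel₀ (two_ne_zero (α := ℂ)) ?_
    rw [two_mul, ← trace_add, ← add_mul, htwice, hRS, Finset.mul_sum]
    simp only [trace, diag, add_mul, mul_diagonal, diagonal_mul, Matrix.add_apply]
    refine Finset.sum_congr rfl fun i _ ↦ ?_
    by_cases h : 0 ≤ l i
    · simp only [sgn, if_pos h, abs_of_nonneg h]
      ring
    · simp only [sgn, if_neg h, abs_of_neg (not_le.mp h), Complex.ofReal_neg]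
      ring
  calc ((R - S) * (R - S)).trace.re = ∑ i, |l i| * |l i| := by
        rw [hRS, diagonal_mul_diagonal, trace_diagonal, Complex.re_sum]
        simp [← Complex.ofReal_mul, abs_mul_abs_self]
    _ ≤ ∑ i, |l i| * (R i i + S i i).re :=
        Finset.sum_le_sum fun i _ ↦ mul_le_mul_of_nonneg_left (habs i) (abs_nonneg _)
    _ = ((R * R - S * S) * diagonal sgn).trace.re := by
        rw [htr, Complex.re_sum]
        simp only [Complex.re_ofReal_mul]
    _ ≤ traceNorm (R * R - S * S) := re_trace_mul_le_traceNorm _ hsgn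

theorem powers_stormer {R S : Matrix m m ℂ} (hR : R.PosSemidef) (hS : S.PosSemidef) :
    ((R - S) * (R - S)).trace.re ≤ traceNorm (R * R - S * S) := by
  have hD : (R - S).IsHermitian := hR.1.sub hS.1
  set φ := Unitary.conjStarAlgAut ℂ (Matrix m m ℂ) (star hD.eigenvectorUnitary)
  have hφ : φ R - φ S = diagonal fun i ↦ (hD.eigenvalues i : ℂ) := by
    rw [← map_sub]
    exact hD.conjStarAlgAut_star_eigenvectorUnitary
  have := powers_stormer_of_sub_eq_diagonal (hR.conjStarAlgAut _) (hS.conjStarAlgAut _) hφ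
  rwa [← map_sub, ← map_mul, trace_conjStarAlgAut, ← map_mul, ← map_mul, ← map_sub,
    traceNorm_conjStarAlgAut] at this

theorem trace_add_trace_sub_le_traceNorm_sub {ρ σ : Matrix m m ℂ} (hρ : ρ.PosSemidef)
    (hσ : σ.PosSemidef) :
    ρ.trace.re + σ.trace.re - 2 * traceNorm (hρ.sqrt * hσ.sqrt) ≤ traceNorm (ρ - σ) := by
  have hR := hρ.posSemidef_sqrt
  have hS := hσ.posSemidef_sqrt
  have hPS := powers_stormer hR hS
  rw [hρ.sqrt_mul_self, hσ.sqrt_mul_self] at hPS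
  have hRS := re_trace_le_traceNorm (hρ.sqrt * hσ.sqrt)
  have hsq : (hρ.sqrt - hσ.sqrt) * (hρ.sqrt - hσ.sqrt) =
      (hρ.sqrt - hσ.sqrt)ᴴ * (hρ.sqrt - hσ.sqrt) := by rw [(hR.1.sub hS.1).eq]
  rw [hsq, re_trace_conjTranspose_mul_self_sub, hR.1.eq, hS.1.eq, hρ.sqrt_mul_self,
    hσ.sqrt_mul_self] at hPS
  linarith

theorem traceNorm_sub_le {ρ σ : Matrix m m ℂ} (hρ : ρ.PosSemidef) (hσ : σ.PosSemidef) :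
    traceNorm (ρ - σ) ≤
      √(ρ.trace.re + σ.trace.re - 2 * traceNorm (hρ.sqrt * hσ.sqrt)) *
        √(ρ.trace.re + σ.trace.re + 2 * traceNorm (hρ.sqrt * hσ.sqrt)) := by
  obtain ⟨W, hW, hAB⟩ := exists_unitary_trace_mul_eq_traceNorm (hρ.sqrt * hσ.sqrt)
  set A := hρ.sqrt
  set B := hσ.sqrt * W
  have hA : Aᴴ = A := hρ.posSemidef_sqrt.1.eq
  have hρA : A * Aᴴ = ρ := by rw [hA, hρ.sqrt_mul_self]
  have hσB : B * Bᴴ = σ := by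
    rw [conjTranspose_mul, hσ.posSemidef_sqrt.1.eq, mul_assoc, ← mul_assoc W,
      ← star_eq_conjTranspose W, Unitary.mul_star_self_of_mem hW, one_mul, hσ.sqrt_mul_self]
  have htrA : (Aᴴ * A).trace = ρ.trace := by rw [trace_mul_comm, hρA]
  have htrB : (Bᴴ * B).trace = σ.trace := by rw [trace_mul_comm, hσB]
  have htAB : (Aᴴ * B).trace.re = traceNorm (hρ.sqrt * hσ.sqrt) := by
    rw [hA, ← mul_assoc, hAB, Complex.ofReal_re]
  refine traceNorm_le_of_add_self_eq (X := A - B) (Y := A + B) ?_ |>.trans_eq ?_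
  · rw [← hρA, ← hσB, conjTranspose_add, conjTranspose_sub]
    noncomm_ring
  · rw [re_trace_conjTranspose_mul_self_sub, re_trace_conjTranspose_mul_self_add, htrA, htrB, htAB]

end StateBounds

section Completion
variable {m : Type*} [Fintype m]

noncomputable def traceCompletion (ρ : Matrix m m ℂ) : Matrix (m ⊕ Unit) (m ⊕ Unit) ℂ :=
  fromBlocks ρ 0 0 (diagonal fun _ ↦ ((1 - ρ.trace.re : ℝ) : ℂ))

theorem re_trace_traceCompletion (ρ : Matrix m m ℂ) : (traceCompletion ρ).trace.re = 1 := by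
  simp [traceCompletion, trace_fromBlocks]

variable [DecidableEq m]

theorem posSemidef_traceCompletion {ρ : Matrix m m ℂ} (hρ : ρ.PosSemidef) (hρ1 : ρ.trace.re ≤ 1) :
    (traceCompletion ρ).PosSemidef :=
  hρ.fromBlocks_zero <| posSemidef_diagonal_iff.mpr fun _ ↦
    Complex.zero_le_real.mpr (sub_nonneg.mpr hρ1)

theorem traceNorm_traceCompletion_sub (ρ σ : Matrix m m ℂ) :
    traceNorm (traceCompletion ρ - traceCompletion σ) = 2 * gTraceDist ρ σ := by
  have : traceCompletion ρ - traceCompletion σ =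
      fromBlocks (ρ - σ) 0 0 (diagonal fun _ ↦ ((σ.trace.re - ρ.trace.re : ℝ) : ℂ)) := by
    rw [traceCompletion, traceCompletion, sub_eq_add_neg, fromBlocks_neg, fromBlocks_add,
      diagonal_neg, diagonal_add]
    simp only [neg_zero, add_zero, ← sub_eq_add_neg, ← Complex.ofReal_sub, sub_sub_sub_cancel_left]
  rw [this, traceNorm_fromBlocks_zero, traceNorm_diagonal, Fintype.sum_unique, gTraceDist,
    abs_sub_comm]
  ring

theorem traceNorm_sqrt_mul_sqrt_traceCompletion {ρ σ : Matrix m m ℂ} (hρ : ρ.PosSemidef)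
    (hσ : σ.PosSemidef) (hρ1 : ρ.trace.re ≤ 1) (hσ1 : σ.trace.re ≤ 1) :
    traceNorm ((posSemidef_traceCompletion hρ hρ1).sqrt *
        (posSemidef_traceCompletion hσ hσ1).sqrt) =
      traceNorm (hρ.sqrt * hσ.sqrt) + √((1 - ρ.trace.re) * (1 - σ.trace.re)) := by
  have hdiag : ∀ {x : ℝ}, x ≤ 1 → (diagonal fun _ : Unit ↦ ((1 - x : ℝ) : ℂ)).PosSemidef :=
    fun hx ↦ posSemidef_diagonal_iff.mpr fun _ ↦ Complex.zero_le_real.mpr (sub_nonneg.mpr hx)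
  rw [show (posSemidef_traceCompletion hρ hρ1).sqrt = _ from
      PosSemidef.sqrt_fromBlocks hρ (hdiag hρ1) _,
    show (posSemidef_traceCompletion hσ hσ1).sqrt = _ from
      PosSemidef.sqrt_fromBlocks hσ (hdiag hσ1) _,
    PosSemidef.sqrt_diagonal (fun _ ↦ sub_nonneg.mpr hρ1),
    PosSemidef.sqrt_diagonal (fun _ ↦ sub_nonneg.mpr hσ1), fromBlocks_multiply,
    diagonal_mul_diagonal]
  simp only [Matrix.mul_zero, Matrix.zero_mul, add_zero, zero_add,
    RCLike.ofReal_eq_complex_ofReal, ← Complex.ofReal_mul]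
  rw [traceNorm_fromBlocks_zero, traceNorm_diagonal, Fintype.sum_unique,
    abs_of_nonneg (by positivity), Real.sqrt_mul (sub_nonneg.mpr hρ1)]

end Completion

theorem fuchs_van_de_graaf_of_bounds {Δ t : ℝ} (ht : 0 ≤ t) (hlow : 2 - 2 * t ≤ 2 * Δ)
    (hup : 2 * Δ ≤ √(2 - 2 * t) * √(2 + 2 * t)) :
    Δ ≤ √(1 - t ^ 2) ∧ √(1 - t ^ 2) ≤ √(2 * Δ - Δ ^ 2) ∧ √(2 * Δ - Δ ^ 2) ≤ √(2 * Δ) := by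
  have hprod : √(2 - 2 * t) * √(2 + 2 * t) = 2 * √(1 - t ^ 2) := by
    rw [← Real.sqrt_mul' _ (by positivity), show (2 - 2 * t) * (2 + 2 * t) =
      2 ^ 2 * (1 - t ^ 2) by ring, Real.sqrt_mul (by positivity), Real.sqrt_sq zero_le_two]
  have hΔ : Δ ≤ √(1 - t ^ 2) := by linarith
  have hΔ1 : Δ ≤ 1 := hΔ.trans (Real.sqrt_le_one.mpr (by nlinarith))
  refine ⟨hΔ, Real.sqrt_le_sqrt ?_, Real.sqrt_le_sqrt (by nlinarith)⟩
  nlinarith [sq_le_sq' (a := 1 - Δ) (b := t) (by linarith) (by linarith)]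

/-- Fuchs–van de Graaf inequalities for subnormalised states. -/
theorem fuchs_van_de_graaf [Fintype n] [DecidableEq n] (ρ σ : Matrix n n ℂ)
    (hρ : ρ.PosSemidef) (hσ : σ.PosSemidef)
    (hρ1 : ρ.trace.re ≤ 1) (hσ1 : σ.trace.re ≤ 1) :
    gTraceDist ρ σ ≤ pDist hρ hσ ∧
    pDist hρ hσ ≤ Real.sqrt (2 * gTraceDist ρ σ - gTraceDist ρ σ ^ 2) ∧
    Real.sqrt (2 * gTraceDist ρ σ - gTraceDist ρ σ ^ 2) ≤ Real.sqrt (2 * gTraceDist ρ σ) := by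
  have hρ' := posSemidef_traceCompletion hρ hρ1
  have hσ' := posSemidef_traceCompletion hσ hσ1
  have hF : gFidelity hρ hσ = traceNorm (hρ'.sqrt * hσ'.sqrt) ^ 2 := by
    rw [gFidelity, traceNorm_sqrt_mul_sqrt_traceCompletion hρ hσ hρ1 hσ1]
  have hlow := trace_add_trace_sub_le_traceNorm_sub hρ' hσ'
  have hup := traceNorm_sub_le hρ' hσ'
  rw [re_trace_traceCompletion, re_trace_traceCompletion, one_add_one_eq_two,
    traceNorm_traceCompletion_sub] at hlow hup
  rw [pDist, hF]
  exact fuchs_van_de_graaf_of_bounds (traceNorm_nonneg _) hlow hup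
end

section
/- For the quadrant region operator R̃^z with z ∈ {0,…,3}, its Fock-basis matrix element is ⟨m|R̃^z|n⟩ = (1/π)·(1/√(n! m!)) · (∫_0^δ γ^{n+m+1} e^{−γ²} dγ) · ∫_{π(2z−1)/4}^{π(2z+1)/4} e^{i(m−n)θ} dθ, and in particular the diagonal element is ⟨n|R̃^z|n⟩ = (1/4)·(1 − Γ(1+n, δ²)/n!). -/
open MeasureTheory

/-- Fock-basis matrix element `⟨m| R |n⟩` of the operator
`R = (1/π) ∫_{γ ∈ s} ∫_{θa}^{θb} γ |γe^{iθ}⟩⟨γe^{iθ}| dθ dγ`. -/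
noncomputable def regionEntry (s : Set ℝ) (θa θb : ℝ) (m n : ℕ) : ℂ :=
  (1 / (Real.pi : ℂ)) *
    ∫ γ in s, ∫ θ in θa..θb,
      (γ : ℂ) ^ (m + n + 1) * Complex.exp (Complex.I * (((m : ℤ) - (n : ℤ) : ℤ) : ℂ) * (θ : ℂ)) *
        (Real.exp (-γ ^ 2) : ℂ) / (Real.sqrt (Nat.factorial m * Nat.factorial n) : ℂ)

/-- Upper incomplete Gamma function `Γ(1+n, a) = ∫_a^∞ x^n e^{-x} dx`. -/
noncomputable def incGamma (n : ℕ) (a : ℝ) : ℝ :=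
  ∫ x in Set.Ioi a, x ^ n * Real.exp (-x)

lemma intA (n : ℕ) : IntegrableOn (fun x : ℝ => x ^ n * Real.exp (-x)) (Set.Ioi 0) := by
  have h := Real.GammaIntegral_convergent (s := n + 1) (by positivity)
  refine h.congr_fun ?_ measurableSet_Ioi
  intro x hx
  simp only [Set.mem_Ioi, add_sub_cancel_right, Real.rpow_natCast]
  ring

lemma intB (n : ℕ) : ∫ x in Set.Ioi (0:ℝ), x ^ n * Real.exp (-x) = n.factorial := by
  have h := Real.Gamma_eq_integral (s := n + 1) (by positivity)
  rw [Real.Gamma_nat_eq_factorial] at h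
  simp only [add_sub_cancel_right] at h
  rw [h]
  refine setIntegral_congr_fun measurableSet_Ioi ?_
  intro x hx
  simp only [Set.mem_Ioi, Real.rpow_natCast]
  ring

lemma intC (n : ℕ) {a : ℝ} (ha : 0 < a) :
    ∫ x in Set.Ioo (0:ℝ) a, x ^ n * Real.exp (-x)
      = n.factorial - ∫ x in Set.Ioi a, x ^ n * Real.exp (-x) := by
  have hu : Set.Ioo (0:ℝ) a ∪ Set.Ici a = Set.Ioi 0 := by
    rw [Set.Ioo_union_Ici_eq_Ioi ha]
  have hd : Disjoint (Set.Ioo (0:ℝ) a) (Set.Ici a) := by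
    apply Set.disjoint_left.2
    rintro x ⟨_, h2⟩ h3
    exact absurd h3 (not_le.2 h2)
  have h1 : IntegrableOn (fun x : ℝ => x ^ n * Real.exp (-x)) (Set.Ioo 0 a) :=
    (intA n).mono_set Set.Ioo_subset_Ioi_self
  have h2 : IntegrableOn (fun x : ℝ => x ^ n * Real.exp (-x)) (Set.Ici a) :=
    (intA n).mono_set (Set.Ici_subset_Ioi.2 ha)
  have := setIntegral_union hd measurableSet_Ici h1 h2
      (f := fun x : ℝ => x ^ n * Real.exp (-x)) (μ := volume)
  rw [hu, intB, integral_Ici_eq_integral_Ioi] at this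
  linarith

lemma img (δ : ℝ) (hδ : 0 < δ) : (fun x : ℝ => x ^ 2) '' Set.Ioo 0 δ = Set.Ioo 0 (δ ^ 2) := by
  ext y
  constructor
  · rintro ⟨x, ⟨hx0, hxδ⟩, rfl⟩
    simp only [Set.mem_Ioo]
    exact ⟨by positivity, by nlinarith⟩
  · rintro ⟨hy0, hyδ⟩
    refine ⟨Real.sqrt y, ⟨Real.sqrt_pos.2 hy0, ?_⟩, Real.sq_sqrt hy0.le⟩
    have := Real.sqrt_lt_sqrt hy0.le hyδ
    rwa [Real.sqrt_sq hδ.le] at this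

lemma intD (n : ℕ) (δ : ℝ) (hδ : 0 < δ) :
    ∫ γ in Set.Ioo (0:ℝ) δ, γ ^ (2 * n + 1) * Real.exp (-γ ^ 2)
      = (1 / 2) * (n.factorial - incGamma n (δ ^ 2)) := by
  have hsub := integral_image_eq_integral_abs_deriv_smul (s := Set.Ioo (0:ℝ) δ)
    (f := fun x => x ^ 2) (f' := fun x => 2 * x) measurableSet_Ioo
    (fun x _ => (hasDerivAt_pow 2 x).hasDerivWithinAt.congr_deriv (by ring))
    (fun a ha b hb hab => by simp only [] at hab; nlinarith [ha.1, hb.1])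
    (fun x => x ^ n * Real.exp (-x))
  rw [img δ hδ] at hsub
  have key : ∫ x in Set.Ioo (0:ℝ) (δ^2), x ^ n * Real.exp (-x)
      = n.factorial - ∫ x in Set.Ioi (δ^2), x ^ n * Real.exp (-x) :=
    intC n (by positivity)
  unfold incGamma
  rw [← key, hsub]
  rw [← integral_const_mul]
  refine setIntegral_congr_fun measurableSet_Ioo ?_
  intro x hx
  have hx0 : 0 < x := hx.1
  simp only [smul_eq_mul, abs_of_pos (by positivity : (0:ℝ) < 2 * x)]
  ring

lemma part1 (δ : ℝ) (z : Fin 4) (m n : ℕ) :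
    (regionEntry (Set.Ioo 0 δ)
        (Real.pi * (2 * (z : ℝ) - 1) / 4) (Real.pi * (2 * (z : ℝ) + 1) / 4) m n
      = (1 / (Real.pi : ℂ)) *
          (1 / (Real.sqrt (Nat.factorial n * Nat.factorial m) : ℂ)) *
          (∫ γ in Set.Ioo (0 : ℝ) δ, (γ : ℂ) ^ (n + m + 1) * (Real.exp (-γ ^ 2) : ℂ)) *
          (∫ θ in (Real.pi * (2 * (z : ℝ) - 1) / 4)..(Real.pi * (2 * (z : ℝ) + 1) / 4),
            Complex.exp (Complex.I * (((m : ℤ) - (n : ℤ) : ℤ) : ℂ) * (θ : ℂ)))) := by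
  set a := Real.pi * (2 * (z : ℝ) - 1) / 4
  set b := Real.pi * (2 * (z : ℝ) + 1) / 4
  set c : ℂ := (Real.sqrt (Nat.factorial m * Nat.factorial n) : ℂ)
  set C : ℂ := ∫ θ in a..b, Complex.exp (Complex.I * (((m : ℤ) - (n : ℤ) : ℤ) : ℂ) * (θ : ℂ))
  have h1 : ∀ γ : ℝ,
      (∫ θ in a..b, (γ : ℂ) ^ (m + n + 1)
          * Complex.exp (Complex.I * (((m : ℤ) - (n : ℤ) : ℤ) : ℂ) * (θ : ℂ))
          * (Real.exp (-γ ^ 2) : ℂ) / c)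
        = ((γ : ℂ) ^ (m + n + 1) * (Real.exp (-γ ^ 2) : ℂ) / c) * C := by
    intro γ
    rw [← intervalIntegral.integral_const_mul]
    exact intervalIntegral.integral_congr (fun θ _ => by ring)
  rw [regionEntry]
  rw [show ((Real.sqrt (Nat.factorial m * Nat.factorial n) : ℝ) : ℂ) = c from rfl]
  simp only [h1]
  rw [integral_mul_const]
  have h2 : (∫ γ in Set.Ioo (0:ℝ) δ, (γ : ℂ) ^ (m + n + 1) * (Real.exp (-γ ^ 2) : ℂ) / c)
      = (∫ γ in Set.Ioo (0:ℝ) δ, (γ : ℂ) ^ (n + m + 1) * (Real.exp (-γ ^ 2) : ℂ)) / c := by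
    rw [← integral_div]
    exact setIntegral_congr_fun measurableSet_Ioo (fun γ _ => by rw [Nat.add_comm m n])
  rw [h2]
  have hc : c = (Real.sqrt (Nat.factorial n * Nat.factorial m) : ℂ) := by
    show ((Real.sqrt ((m.factorial : ℝ) * n.factorial) : ℝ) : ℂ) = _
    rw [mul_comm ((m.factorial : ℝ)) ((n.factorial : ℝ))]
  rw [hc]
  ring

/-- The quadrant test-round region operator `R̃^z` factorises into a radial and an
angular integral, and its diagonal Fock-basis entries are
`⟨n|R̃^z|n⟩ = (1/4)(1 − Γ(1+n, δ²)/n!)`. -/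
theorem quadrant_region_operator_entries (δ : ℝ) (hδ : 0 < δ) (z : Fin 4) (m n : ℕ) :
    (regionEntry (Set.Ioo 0 δ)
        (Real.pi * (2 * (z : ℝ) - 1) / 4) (Real.pi * (2 * (z : ℝ) + 1) / 4) m n
      = (1 / (Real.pi : ℂ)) *
          (1 / (Real.sqrt (Nat.factorial n * Nat.factorial m) : ℂ)) *
          (∫ γ in Set.Ioo (0 : ℝ) δ, (γ : ℂ) ^ (n + m + 1) * (Real.exp (-γ ^ 2) : ℂ)) *
          (∫ θ in (Real.pi * (2 * (z : ℝ) - 1) / 4)..(Real.pi * (2 * (z : ℝ) + 1) / 4),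
            Complex.exp (Complex.I * (((m : ℤ) - (n : ℤ) : ℤ) : ℂ) * (θ : ℂ))))
    ∧ regionEntry (Set.Ioo 0 δ)
        (Real.pi * (2 * (z : ℝ) - 1) / 4) (Real.pi * (2 * (z : ℝ) + 1) / 4) n n
      = (1 / 4 : ℂ) * (1 - ((incGamma n (δ ^ 2) / Nat.factorial n : ℝ) : ℂ)) := by
  refine ⟨part1 δ z m n, ?_⟩
  rw [part1 δ z n n]
  have hang : (∫ θ in (Real.pi * (2 * (z : ℝ) - 1) / 4)..(Real.pi * (2 * (z : ℝ) + 1) / 4),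
      Complex.exp (Complex.I * (((n : ℤ) - (n : ℤ) : ℤ) : ℂ) * (θ : ℂ)))
      = ((Real.pi / 2 : ℝ) : ℂ) := by
    simp only [sub_self, Int.cast_zero, mul_zero, zero_mul, Complex.exp_zero]
    rw [intervalIntegral.integral_const]
    rw [show Real.pi * (2 * (z : ℝ) + 1) / 4 - Real.pi * (2 * (z : ℝ) - 1) / 4
        = Real.pi / 2 by ring]
    simp
  have hrad : (∫ γ in Set.Ioo (0:ℝ) δ, (γ : ℂ) ^ (n + n + 1) * (Real.exp (-γ ^ 2) : ℂ))
      = (((1 / 2) * (n.factorial - incGamma n (δ ^ 2)) : ℝ) : ℂ) := by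
    calc (∫ γ in Set.Ioo (0:ℝ) δ, (γ : ℂ) ^ (n + n + 1) * (Real.exp (-γ ^ 2) : ℂ))
        = ∫ γ in Set.Ioo (0:ℝ) δ, ((γ ^ (2 * n + 1) * Real.exp (-γ ^ 2) : ℝ) : ℂ) := by
          refine setIntegral_congr_fun measurableSet_Ioo (fun γ _ => ?_)
          rw [show 2 * n + 1 = n + n + 1 by ring]
          push_cast
          ring
      _ = (((∫ γ in Set.Ioo (0:ℝ) δ, γ ^ (2 * n + 1) * Real.exp (-γ ^ 2)) : ℝ) : ℂ) :=
          integral_ofReal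
      _ = (((1 / 2) * (n.factorial - incGamma n (δ ^ 2)) : ℝ) : ℂ) := by
          rw [intD n δ hδ]
  have hfac : (Real.sqrt (Nat.factorial n * Nat.factorial n) : ℂ) = (n.factorial : ℂ) := by
    rw [Real.sqrt_mul_self (by positivity : (0:ℝ) ≤ n.factorial)]
    norm_cast
  rw [hang, hrad, hfac]
  have hπ : (Real.pi : ℂ) ≠ 0 := by
    simpa using Real.pi_ne_zero
  have hn : (n.factorial : ℂ) ≠ 0 := by
    exact_mod_cast Nat.cast_ne_zero.2 n.factorial_ne_zero
  push_cast
  field_simp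
  ring
end
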